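/- arXiv:2203.12126 — 2 statements merged into one kernel-verified Lean document; each statement's English description precedes it below -/
import Mathlib

section
/- Define φ : ℝ → ℝ by φ(r) = (1/8)(3 − 2|r| + √(1 + 4|r| − 4r²)) for 0 ≤ |r| ≤ 1, φ(r) = (1/8)(5 − 2|r| − √(−7 + 12|r| − 4r²)) for 1 ≤ |r| ≤ 2, and φ(r) = 0 for |r| ≥ 2. Then for every r ∈ [0,1], one has φ(r) + φ(r − 2) = 1/2 and φ(r + 1) + φ(r − 1) = 1/2. In particular, for every r ∈ [0,1], φ(r+1) + φ(r) + φ(r−1) + φ(r−2) = 1, so the translates of φ by integers sum to 1 at every real number. -/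
/-!
For `r ∈ [0,1]` the four translates `r + 1, r, r - 1, r - 2` fall into the two nonzero branches
of `φ`, and after substituting `|·|` both branches involved in each pair have the same radicand
`1 + 4r - 4r²`; the square roots cancel and the pair sums to `1/2`. Since `φ` vanishes off
`(-2, 2)`, the integer translates at `x` reduce to the four translates at `r = Int.fract x`.
-/

/-- The Peskin four-point kernel. -/
noncomputable def peskinPhi (r : ℝ) : ℝ :=
  if |r| ≤ 1 then (3 - 2 * |r| + Real.sqrt (1 + 4 * |r| - 4 * r ^ 2)) / 8
  else if |r| ≤ 2 then (5 - 2 * |r| - Real.sqrt (-7 + 12 * |r| - 4 * r ^ 2)) / 8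
  else 0

theorem tsum_int_translate_eq_tsum_fract (f : ℝ → ℝ) (x : ℝ) :
    ∑' n : ℤ, f (x - n) = ∑' n : ℤ, f (Int.fract x - n) := by
  rw [← (Equiv.addLeft ⌊x⌋).tsum_eq]
  simp only [Equiv.coe_addLeft, Int.cast_add, Int.fract, sub_sub]

theorem tsum_int_translate_of_mem_Ico {f : ℝ → ℝ} (hf : ∀ x, 2 ≤ |x| → f x = 0) {r : ℝ}
    (hr : r ∈ Set.Ico 0 1) :
    ∑' n : ℤ, f (r - n) = f (r + 1) + f r + f (r - 1) + f (r - 2) := by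
  obtain ⟨hr0, hr1⟩ := hr
  have hvanish : ∀ n ∉ ({-1, 0, 1, 2} : Finset ℤ), f (r - n) = 0 := by
    intro n hn
    simp only [Finset.mem_insert, Finset.mem_singleton] at hn
    apply hf
    rcases (by omega : n ≤ -2 ∨ 3 ≤ n) with hn | hn
    · have : (n : ℝ) ≤ -2 := by exact_mod_cast hn
      rw [abs_of_nonneg (by linarith)]
      linarith
    · have : (3 : ℝ) ≤ n := by exact_mod_cast hn
      rw [abs_of_nonpos (by linarith)]
      linarith
  rw [tsum_eq_sum hvanish, Finset.sum_insert (by decide), Finset.sum_insert (by decide),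
    Finset.sum_pair (by decide)]
  push_cast
  ring_nf

theorem peskinPhi_of_abs_le_one {r : ℝ} (h : |r| ≤ 1) :
    peskinPhi r = (3 - 2 * |r| + Real.sqrt (1 + 4 * |r| - 4 * r ^ 2)) / 8 := by
  simp [peskinPhi, h]

theorem peskinPhi_of_one_le_abs_of_abs_le_two {r : ℝ} (h1 : 1 ≤ |r|) (h2 : |r| ≤ 2) :
    peskinPhi r = (5 - 2 * |r| - Real.sqrt (-7 + 12 * |r| - 4 * r ^ 2)) / 8 := by
  rcases h1.eq_or_lt with h | h
  · have hsq : r ^ 2 = 1 := by rw [← sq_abs, ← h]; norm_num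
    rw [peskinPhi_of_abs_le_one h.ge, ← h, hsq]
    norm_num
  · rw [peskinPhi, if_neg h.not_ge, if_pos h2]

theorem peskinPhi_of_two_le_abs {r : ℝ} (h : 2 ≤ |r|) : peskinPhi r = 0 := by
  rcases h.eq_or_lt with h | h
  · have hsq : r ^ 2 = 4 := by rw [← sq_abs, ← h]; norm_num
    rw [peskinPhi_of_one_le_abs_of_abs_le_two (by linarith) h.ge, ← h, hsq]
    norm_num
  · rw [peskinPhi, if_neg (by linarith), if_neg h.not_ge]

theorem peskinPhi_add_peskinPhi_sub_two {r : ℝ} (hr : r ∈ Set.Icc 0 1) :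
    peskinPhi r + peskinPhi (r - 2) = 1 / 2 := by
  obtain ⟨hr0, hr1⟩ := hr
  have ha : |r| = r := abs_of_nonneg hr0
  have hb : |r - 2| = 2 - r := by rw [abs_of_nonpos (by linarith)]; ring
  rw [peskinPhi_of_abs_le_one (by rw [ha]; exact hr1),
    peskinPhi_of_one_le_abs_of_abs_le_two (by rw [hb]; linarith) (by rw [hb]; linarith), ha, hb,
    show -7 + 12 * (2 - r) - 4 * (r - 2) ^ 2 = 1 + 4 * r - 4 * r ^ 2 by ring]
  ring

theorem peskinPhi_add_one_add_peskinPhi_sub_one {r : ℝ} (hr : r ∈ Set.Icc 0 1) :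
    peskinPhi (r + 1) + peskinPhi (r - 1) = 1 / 2 := by
  obtain ⟨hr0, hr1⟩ := hr
  have ha : |r + 1| = r + 1 := abs_of_nonneg (by linarith)
  have hb : |r - 1| = 1 - r := by rw [abs_of_nonpos (by linarith)]; ring
  rw [peskinPhi_of_one_le_abs_of_abs_le_two (by rw [ha]; linarith) (by rw [ha]; linarith),
    peskinPhi_of_abs_le_one (by rw [hb]; linarith), ha, hb,
    show -7 + 12 * (r + 1) - 4 * (r + 1) ^ 2 = 1 + 4 * r - 4 * r ^ 2 by ring,
    show 1 + 4 * (1 - r) - 4 * (r - 1) ^ 2 = 1 + 4 * r - 4 * r ^ 2 by ring]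
  ring

theorem peskinPhi_four_translates_sum {r : ℝ} (hr : r ∈ Set.Icc 0 1) :
    peskinPhi (r + 1) + peskinPhi r + peskinPhi (r - 1) + peskinPhi (r - 2) = 1 := by
  linarith [peskinPhi_add_peskinPhi_sub_two hr, peskinPhi_add_one_add_peskinPhi_sub_one hr]

theorem tsum_peskinPhi_int_translate (x : ℝ) : ∑' n : ℤ, peskinPhi (x - n) = 1 := by
  have hr : Int.fract x ∈ Set.Ico 0 1 := ⟨Int.fract_nonneg x, Int.fract_lt_one x⟩
  rw [tsum_int_translate_eq_tsum_fract,
    tsum_int_translate_of_mem_Ico (fun _ => peskinPhi_of_two_le_abs) hr]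
  exact peskinPhi_four_translates_sum (Set.Ico_subset_Icc_self hr)

/-- Partition-of-unity identities for the Peskin four-point kernel: for `r ∈ [0,1]`,
the even and odd integer translates each sum to `1/2`, hence the four nonzero translates
sum to `1`, and the integer translates of `φ` sum to `1` at every real number. -/
theorem stmt2 :
    (∀ r ∈ Set.Icc (0:ℝ) 1, peskinPhi r + peskinPhi (r - 2) = 1 / 2) ∧
    (∀ r ∈ Set.Icc (0:ℝ) 1, peskinPhi (r + 1) + peskinPhi (r - 1) = 1 / 2) ∧
    (∀ r ∈ Set.Icc (0:ℝ) 1,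
      peskinPhi (r + 1) + peskinPhi r + peskinPhi (r - 1) + peskinPhi (r - 2) = 1) ∧
    (∀ x : ℝ, ∑' n : ℤ, peskinPhi (x - n) = 1) :=
  ⟨fun _ => peskinPhi_add_peskinPhi_sub_two, fun _ => peskinPhi_add_one_add_peskinPhi_sub_one,
    fun _ => peskinPhi_four_translates_sum, tsum_peskinPhi_int_translate⟩
end

section
/- Let k ∈ ℝ, let δ_h : ℝ² → ℝ be continuously differentiable, and let G_h : ℝ² → ℝ be three times continuously differentiable with ΔG_h(z) − k²G_h(z) = −δ_h(z) for all z ∈ ℝ². Let ℓ > 0 and let X : [0,ℓ] → ℝ², Q : [0,ℓ] → ℝ, and n : [0,ℓ] → ℝ² be continuous. Then the double layer potential u(x) = ∫₀^ℓ Q(s) ⟨∇G_h(x − X(s)), n(s)⟩ ds is twice continuously differentiable and satisfies Δu(x) − k²u(x) = −div(y ↦ ∫₀^ℓ Q(s) δ_h(y − X(s)) n(s) ds)(x) for every x ∈ ℝ²; that is, u solves the dipole-force Helmholtz equation Lu + S̃Q = 0, where S̃Q = div(S(Qn)). -/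
open MeasureTheory

set_option synthInstance.maxHeartbeats 1000000
set_option maxHeartbeats 1000000

/-- First partial derivative of `f : ℝ² → ℝ` (direction `(1,0)`). -/
noncomputable def pd1 (f : ℝ × ℝ → ℝ) (x : ℝ × ℝ) : ℝ := fderiv ℝ f x (1, 0)

/-- Second partial derivative of `f : ℝ² → ℝ` (direction `(0,1)`). -/
noncomputable def pd2 (f : ℝ × ℝ → ℝ) (x : ℝ × ℝ) : ℝ := fderiv ℝ f x (0, 1)

/-- Gradient of `f : ℝ² → ℝ`. -/
noncomputable def grad2 (f : ℝ × ℝ → ℝ) (x : ℝ × ℝ) : ℝ × ℝ := (pd1 f x, pd2 f x)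

/-- Laplacian of `f : ℝ² → ℝ`. -/
noncomputable def lap2 (f : ℝ × ℝ → ℝ) (x : ℝ × ℝ) : ℝ := pd1 (pd1 f) x + pd2 (pd2 f) x

/-- Divergence of a vector field `W : ℝ² → ℝ²`. -/
noncomputable def div2 (W : ℝ × ℝ → ℝ × ℝ) (x : ℝ × ℝ) : ℝ :=
  fderiv ℝ (fun y => (W y).1) x (1, 0) + fderiv ℝ (fun y => (W y).2) x (0, 1)

/-- Euclidean inner product on `ℝ²`. -/
def dot2 (a b : ℝ × ℝ) : ℝ := a.1 * b.1 + a.2 * b.2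

/- ### Auxiliary lemmas -/

/-- Tietze extension for continuous functions on a closed subset of `ℝ`. -/
lemma extendCont {Y : Type} [TopologicalSpace Y] [TietzeExtension.{0} Y] {s : Set ℝ}
    (hs : IsClosed s) {f : ℝ → Y} (hf : ContinuousOn f s) :
    ∃ g : ℝ → Y, Continuous g ∧ ∀ x ∈ s, g x = f x := by
  obtain ⟨g, hg⟩ := ContinuousMap.exists_restrict_eq hs ⟨s.restrict f, hf.restrict⟩
  refine ⟨g, g.continuous, fun x hx => ?_⟩
  have := congrFun (congrArg ContinuousMap.toFun hg) ⟨x, hx⟩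
  exact this

/-- Differentiation under the interval integral sign. -/
lemma hasFDerivAt_vI {E : Type} [NormedAddCommGroup E] [NormedSpace ℝ E] [CompleteSpace E]
    (c : ℝ → ℝ) (hc : Continuous c) (X : ℝ → ℝ × ℝ) (hX : Continuous X)
    (ℓ : ℝ) (g : ℝ × ℝ → E) (hg : ContDiff ℝ 1 g) (x₀ : ℝ × ℝ) :
    HasFDerivAt (fun x => ∫ s in (0:ℝ)..ℓ, c s • g (x - X s))
      (∫ s in (0:ℝ)..ℓ, c s • fderiv ℝ g (x₀ - X s)) x₀ := by
  have hgc : Continuous g := hg.continuous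
  have hg' : Continuous (fderiv ℝ g) := hg.continuous_fderiv one_ne_zero
  have hder : ∀ z, HasFDerivAt g (fderiv ℝ g z) z :=
    fun z => (hg.differentiable one_ne_zero z).hasFDerivAt
  obtain ⟨C, hC⟩ := ((isCompact_closedBall x₀ 1).prod isCompact_uIcc).exists_bound_of_continuousOn
      (f := fun p : (ℝ × ℝ) × ℝ => c p.2 • fderiv ℝ g (p.1 - X p.2))
      (((hc.comp continuous_snd).smul
        (hg'.comp (continuous_fst.sub (hX.comp continuous_snd)))).continuousOn)
  apply intervalIntegral.hasFDerivAt_integral_of_dominated_of_fderiv_le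
      (F' := fun x s => c s • fderiv ℝ g (x - X s)) (bound := fun _ => C) (Metric.ball_mem_nhds x₀ one_pos)
  · exact Filter.Eventually.of_forall fun x =>
      ((hc.smul (hgc.comp (continuous_const.sub hX))).aestronglyMeasurable).restrict
  · exact (hc.smul (hgc.comp (continuous_const.sub hX))).intervalIntegrable _ _
  · exact ((hc.smul (hg'.comp (continuous_const.sub hX))).aestronglyMeasurable).restrict
  · refine Filter.Eventually.of_forall fun t ht x hx => hC (x, t) ?_
    exact ⟨Metric.ball_subset_closedBall hx, Set.uIoc_subset_uIcc ht⟩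
  · exact intervalIntegrable_const
  · refine Filter.Eventually.of_forall fun t ht x hx => ?_
    have h1 : HasFDerivAt (fun y : ℝ × ℝ => y - X t) (ContinuousLinearMap.id ℝ (ℝ × ℝ)) x :=
      (hasFDerivAt_id x).sub_const (X t)
    have := ((hder (x - X t)).comp x h1).const_smul (c t)
    exact this

/-- Smoothness of parametric interval integrals. -/
lemma contDiff_vI (c : ℝ → ℝ) (hc : Continuous c) (X : ℝ → ℝ × ℝ) (hX : Continuous X)
    (ℓ : ℝ) : ∀ (m : ℕ) {E : Type} [NormedAddCommGroup E] [NormedSpace ℝ E] [CompleteSpace E]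
      (g : ℝ × ℝ → E), ContDiff ℝ m g →
      ContDiff ℝ m (fun x => ∫ s in (0:ℝ)..ℓ, c s • g (x - X s)) := by
  intro m
  induction m with
  | zero =>
    intro E _ _ _ g hg
    rw [Nat.cast_zero, contDiff_zero]
    exact intervalIntegral.continuous_parametric_intervalIntegral_of_continuous'
      (f := fun x s => c s • g (x - X s))
      ((hc.comp continuous_snd).smul
        ((contDiff_zero.mp hg).comp (continuous_fst.sub (hX.comp continuous_snd)))) 0 ℓ
  | succ m ih =>
    intro E _ _ _ g hg
    have hcast : ((m + 1 : ℕ) : WithTop ℕ∞) = (m : WithTop ℕ∞) + 1 := by push_cast; rfl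
    rw [hcast] at hg ⊢
    rw [contDiff_succ_iff_fderiv] at hg ⊢
    have hg1 : ContDiff ℝ 1 g := by
      rw [show (1 : WithTop ℕ∞) = (0:ℕ∞) + 1 from rfl, contDiff_succ_iff_fderiv]
      exact ⟨hg.1, by simp, hg.2.2.of_le (by exact_mod_cast bot_le)⟩
    refine ⟨fun x => (hasFDerivAt_vI c hc X hX ℓ g hg1 x).differentiableAt, by simp, ?_⟩
    have heq : fderiv ℝ (fun x => ∫ s in (0:ℝ)..ℓ, c s • g (x - X s))
        = fun x => ∫ s in (0:ℝ)..ℓ, c s • fderiv ℝ g (x - X s) :=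
      funext fun x => (hasFDerivAt_vI c hc X hX ℓ g hg1 x).fderiv
    rw [heq]
    exact ih (fderiv ℝ g) hg.2.2

lemma fderiv_vI_apply (c : ℝ → ℝ) (hc : Continuous c) (X : ℝ → ℝ × ℝ) (hX : Continuous X)
    (ℓ : ℝ) (g : ℝ × ℝ → ℝ) (hg : ContDiff ℝ 1 g) (v : ℝ × ℝ) (x : ℝ × ℝ) :
    fderiv ℝ (fun x => ∫ s in (0:ℝ)..ℓ, c s • g (x - X s)) x v
      = ∫ s in (0:ℝ)..ℓ, c s • fderiv ℝ g (x - X s) v := by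
  rw [(hasFDerivAt_vI c hc X hX ℓ g hg x).fderiv]
  have hint : IntervalIntegrable (fun s => c s • fderiv ℝ g (x - X s)) volume 0 ℓ :=
    (hc.smul ((hg.continuous_fderiv one_ne_zero).comp (continuous_const.sub hX))).intervalIntegrable _ _
  rw [ContinuousLinearMap.intervalIntegral_apply hint v]
  simp

lemma contDiff_pdv {m : ℕ∞} (f : ℝ × ℝ → ℝ) (hf : ContDiff ℝ (m + 1) f) (v : ℝ × ℝ) :
    ContDiff ℝ m (fun z => fderiv ℝ f z v) := by
  rw [contDiff_succ_iff_fderiv] at hf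
  exact (ContinuousLinearMap.apply ℝ ℝ v).contDiff.comp hf.2.2

lemma pd_apply_eq (f : ℝ × ℝ → ℝ) (hf : ContDiff ℝ 2 f) (x a b : ℝ × ℝ) :
    fderiv ℝ (fun y => fderiv ℝ f y b) x a = fderiv ℝ (fderiv ℝ f) x a b := by
  have hd : DifferentiableAt ℝ (fderiv ℝ f) x := by
    have : ContDiff ℝ 1 (fderiv ℝ f) := by
      have := (contDiff_succ_iff_fderiv.mp (by exact_mod_cast hf : ContDiff ℝ ((1:ℕ∞)+1) f)).2.2
      exact this
    exact (this.differentiable one_ne_zero) x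
  rw [fderiv_clm_apply hd (differentiableAt_const b)]
  simp

lemma pd_comm (f : ℝ × ℝ → ℝ) (hf : ContDiff ℝ 2 f) (a b : ℝ × ℝ) :
    (fun x => fderiv ℝ (fun y => fderiv ℝ f y b) x a)
      = fun x => fderiv ℝ (fun y => fderiv ℝ f y a) x b := by
  funext x
  rw [pd_apply_eq f hf x a b, pd_apply_eq f hf x b a]
  exact (hf.contDiffAt.isSymmSndFDerivAt (by simp)) a b

/-- The basic parametric integral used throughout. -/
noncomputable def vI (ℓ : ℝ) (X : ℝ → ℝ × ℝ) (c : ℝ → ℝ) (g : ℝ × ℝ → ℝ) : ℝ × ℝ → ℝ :=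
  fun x => ∫ s in (0:ℝ)..ℓ, c s • g (x - X s)

lemma vI_contDiff {ℓ : ℝ} {X : ℝ → ℝ × ℝ} {c : ℝ → ℝ} (hX : Continuous X) (hc : Continuous c)
    (m : ℕ) {g : ℝ × ℝ → ℝ} (hg : ContDiff ℝ m g) : ContDiff ℝ m (vI ℓ X c g) :=
  contDiff_vI c hc X hX ℓ m g hg

lemma vI_diff {ℓ : ℝ} {X : ℝ → ℝ × ℝ} {c : ℝ → ℝ} (hX : Continuous X) (hc : Continuous c)
    {g : ℝ × ℝ → ℝ} (hg : ContDiff ℝ 1 g) : Differentiable ℝ (vI ℓ X c g) :=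
  fun x => (hasFDerivAt_vI c hc X hX ℓ g hg x).differentiableAt

lemma vI_pd1 {ℓ : ℝ} {X : ℝ → ℝ × ℝ} {c : ℝ → ℝ} (hX : Continuous X) (hc : Continuous c)
    {g : ℝ × ℝ → ℝ} (hg : ContDiff ℝ 1 g) : pd1 (vI ℓ X c g) = vI ℓ X c (pd1 g) :=
  funext fun x => fderiv_vI_apply c hc X hX ℓ g hg (1, 0) x

lemma vI_pd2 {ℓ : ℝ} {X : ℝ → ℝ × ℝ} {c : ℝ → ℝ} (hX : Continuous X) (hc : Continuous c)
    {g : ℝ × ℝ → ℝ} (hg : ContDiff ℝ 1 g) : pd2 (vI ℓ X c g) = vI ℓ X c (pd2 g) :=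
  funext fun x => fderiv_vI_apply c hc X hX ℓ g hg (0, 1) x

lemma pd1_add {f g : ℝ × ℝ → ℝ} (hf : Differentiable ℝ f) (hg : Differentiable ℝ g) :
    pd1 (fun y => f y + g y) = fun y => pd1 f y + pd1 g y := by
  funext x
  simp only [pd1]
  rw [fderiv_fun_add (hf x) (hg x)]
  rfl

lemma pd2_add {f g : ℝ × ℝ → ℝ} (hf : Differentiable ℝ f) (hg : Differentiable ℝ g) :
    pd2 (fun y => f y + g y) = fun y => pd2 f y + pd2 g y := by
  funext x
  simp only [pd2]
  rw [fderiv_fun_add (hf x) (hg x)]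
  rfl

lemma vI_linear {ℓ : ℝ} {X : ℝ → ℝ × ℝ} {c : ℝ → ℝ} (hX : Continuous X) (hc : Continuous c)
    (k : ℝ) {a b d e : ℝ × ℝ → ℝ} (ha : Continuous a) (hb : Continuous b)
    (hd : Continuous d) (he : Continuous e)
    (h : ∀ z, a z + b z - k ^ 2 * d z = -(e z)) (x : ℝ × ℝ) :
    vI ℓ X c a x + vI ℓ X c b x - k ^ 2 * vI ℓ X c d x = -(vI ℓ X c e x) := by
  unfold vI
  have ia : IntervalIntegrable (fun s => c s • a (x - X s)) volume 0 ℓ :=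
    (hc.smul (ha.comp (continuous_const.sub hX))).intervalIntegrable _ _
  have ib : IntervalIntegrable (fun s => c s • b (x - X s)) volume 0 ℓ :=
    (hc.smul (hb.comp (continuous_const.sub hX))).intervalIntegrable _ _
  have id' : IntervalIntegrable (fun s => c s • d (x - X s)) volume 0 ℓ :=
    (hc.smul (hd.comp (continuous_const.sub hX))).intervalIntegrable _ _
  rw [← intervalIntegral.integral_add ia ib, ← intervalIntegral.integral_const_mul,
    ← intervalIntegral.integral_sub (ia.add ib) (id'.const_mul _),
    ← intervalIntegral.integral_neg]
  apply intervalIntegral.integral_congr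
  intro s _
  simp only [smul_eq_mul]
  linear_combination (c s) * h (x - X s)
/-- If `G_h` is a `C³` regularized Green's function for the Helmholtz operator,
`ΔG_h - k²G_h = -δ_h` with `δ_h` of class `C¹`, then the double layer potential
`u(x) = ∫₀^ℓ Q(s) ⟨∇G_h(x - X(s)), n(s)⟩ ds` is `C²` and satisfies
`Δu - k²u = -div (S(Qn))`, i.e. `Lu + S̃Q = 0`. -/
theorem stmt7 (k : ℝ) (δh Gh : ℝ × ℝ → ℝ) (hδ : ContDiff ℝ 1 δh)
    (hGh : ContDiff ℝ 3 Gh) (hGreen : ∀ z, lap2 Gh z - k ^ 2 * Gh z = -δh z)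
    (ℓ : ℝ) (hℓ : 0 < ℓ) (X : ℝ → ℝ × ℝ) (Q : ℝ → ℝ) (n : ℝ → ℝ × ℝ)
    (hX : ContinuousOn X (Set.Icc 0 ℓ)) (hQ : ContinuousOn Q (Set.Icc 0 ℓ))
    (hn : ContinuousOn n (Set.Icc 0 ℓ)) :
    ContDiff ℝ 2 (fun x => ∫ s in (0:ℝ)..ℓ, Q s * dot2 (grad2 Gh (x - X s)) (n s)) ∧
    ∀ x : ℝ × ℝ,
      lap2 (fun x' => ∫ s in (0:ℝ)..ℓ, Q s * dot2 (grad2 Gh (x' - X s)) (n s)) x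
        - k ^ 2 * (∫ s in (0:ℝ)..ℓ, Q s * dot2 (grad2 Gh (x - X s)) (n s))
      = -div2 (fun y => ∫ s in (0:ℝ)..ℓ, (Q s * δh (y - X s)) • n s) x := by
  obtain ⟨Q', hQ'c, hQ'⟩ := extendCont isClosed_Icc hQ
  obtain ⟨X', hX'c, hX'⟩ := extendCont isClosed_Icc hX
  obtain ⟨n', hn'c, hn'⟩ := extendCont isClosed_Icc hn
  have hIcc : Set.uIcc (0:ℝ) ℓ = Set.Icc 0 ℓ := Set.uIcc_of_le hℓ.le
  have hc1 : Continuous (fun s => Q' s * (n' s).1) := hQ'c.mul (continuous_fst.comp hn'c)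
  have hc2 : Continuous (fun s => Q' s * (n' s).2) := hQ'c.mul (continuous_snd.comp hn'c)
  -- smoothness facts for partial derivatives
  have C1 : ∀ {f : ℝ × ℝ → ℝ}, ContDiff ℝ 1 f → Continuous (pd1 f) := fun hf =>
    (ContinuousLinearMap.apply ℝ ℝ ((1:ℝ), (0:ℝ))).continuous.comp (hf.continuous_fderiv one_ne_zero)
  have C2 : ∀ {f : ℝ × ℝ → ℝ}, ContDiff ℝ 1 f → Continuous (pd2 f) := fun hf =>
    (ContinuousLinearMap.apply ℝ ℝ ((0:ℝ), (1:ℝ))).continuous.comp (hf.continuous_fderiv one_ne_zero)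
  have P1 : ∀ {f : ℝ × ℝ → ℝ}, ContDiff ℝ 2 f → ContDiff ℝ 1 (pd1 f) := by
    intro f hf
    have := contDiff_pdv (m := 1) f (by norm_num; exact hf) ((1:ℝ), (0:ℝ))
    norm_num at this; exact this
  have P2 : ∀ {f : ℝ × ℝ → ℝ}, ContDiff ℝ 2 f → ContDiff ℝ 1 (pd2 f) := by
    intro f hf
    have := contDiff_pdv (m := 1) f (by norm_num; exact hf) ((0:ℝ), (1:ℝ))
    norm_num at this; exact this
  have P1' : ∀ {f : ℝ × ℝ → ℝ}, ContDiff ℝ 3 f → ContDiff ℝ 2 (pd1 f) := by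
    intro f hf
    have := contDiff_pdv (m := 2) f (by norm_num; exact hf) ((1:ℝ), (0:ℝ))
    norm_num at this; exact this
  have P2' : ∀ {f : ℝ × ℝ → ℝ}, ContDiff ℝ 3 f → ContDiff ℝ 2 (pd2 f) := by
    intro f hf
    have := contDiff_pdv (m := 2) f (by norm_num; exact hf) ((0:ℝ), (1:ℝ))
    norm_num at this; exact this
  have hGh2 : ContDiff ℝ 2 Gh := hGh.of_le (by norm_num)
  have hg1_2 : ContDiff ℝ 2 (pd1 Gh) := P1' hGh
  have hg2_2 : ContDiff ℝ 2 (pd2 Gh) := P2' hGh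
  have hg1_1 : ContDiff ℝ 1 (pd1 Gh) := hg1_2.of_le one_le_two
  have hg2_1 : ContDiff ℝ 1 (pd2 Gh) := hg2_2.of_le one_le_two
  have h11 : ContDiff ℝ 1 (pd1 (pd1 Gh)) := P1 hg1_2
  have h21 : ContDiff ℝ 1 (pd2 (pd1 Gh)) := P2 hg1_2
  have h12 : ContDiff ℝ 1 (pd1 (pd2 Gh)) := P1 hg2_2
  have h22 : ContDiff ℝ 1 (pd2 (pd2 Gh)) := P2 hg2_2
  -- the potential as a sum of two vI integrals
  have hux : ∀ x : ℝ × ℝ, (∫ s in (0:ℝ)..ℓ, Q s * dot2 (grad2 Gh (x - X s)) (n s))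
      = vI ℓ X' (fun s => Q' s * (n' s).1) (pd1 Gh) x
        + vI ℓ X' (fun s => Q' s * (n' s).2) (pd2 Gh) x := by
    intro x
    have i1 : IntervalIntegrable (fun s => (Q' s * (n' s).1) • pd1 Gh (x - X' s)) volume 0 ℓ :=
      (hc1.smul (hg1_2.continuous.comp (continuous_const.sub hX'c))).intervalIntegrable _ _
    have i2 : IntervalIntegrable (fun s => (Q' s * (n' s).2) • pd2 Gh (x - X' s)) volume 0 ℓ :=
      (hc2.smul (hg2_2.continuous.comp (continuous_const.sub hX'c))).intervalIntegrable _ _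
    simp only [vI]
    rw [← intervalIntegral.integral_add i1 i2]
    apply intervalIntegral.integral_congr
    intro s hs
    rw [hIcc] at hs
    beta_reduce
    rw [hQ' s hs, hX' s hs, hn' s hs]
    simp only [dot2, grad2, smul_eq_mul]
    ring
  have huf : (fun x => ∫ s in (0:ℝ)..ℓ, Q s * dot2 (grad2 Gh (x - X s)) (n s))
      = fun x => vI ℓ X' (fun s => Q' s * (n' s).1) (pd1 Gh) x
        + vI ℓ X' (fun s => Q' s * (n' s).2) (pd2 Gh) x := funext hux
  constructor
  · rw [huf]
    have a1 : ContDiff ℝ ((2:ℕ) : WithTop ℕ∞) (vI ℓ X' (fun s => Q' s * (n' s).1) (pd1 Gh)) :=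
      vI_contDiff hX'c hc1 2 (by exact_mod_cast hg1_2)
    have a2 : ContDiff ℝ ((2:ℕ) : WithTop ℕ∞) (vI ℓ X' (fun s => Q' s * (n' s).2) (pd2 Gh)) :=
      vI_contDiff hX'c hc2 2 (by exact_mod_cast hg2_2)
    exact_mod_cast a1.add a2
  · intro x
    rw [hux x, huf]
    -- second derivatives of the potential
    have hpdU1 : pd1 (fun y => vI ℓ X' (fun s => Q' s * (n' s).1) (pd1 Gh) y
            + vI ℓ X' (fun s => Q' s * (n' s).2) (pd2 Gh) y)
        = fun y => vI ℓ X' (fun s => Q' s * (n' s).1) (pd1 (pd1 Gh)) y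
            + vI ℓ X' (fun s => Q' s * (n' s).2) (pd1 (pd2 Gh)) y := by
      rw [pd1_add (vI_diff hX'c hc1 hg1_1) (vI_diff hX'c hc2 hg2_1),
        vI_pd1 hX'c hc1 hg1_1, vI_pd1 hX'c hc2 hg2_1]
    have hpdU2 : pd2 (fun y => vI ℓ X' (fun s => Q' s * (n' s).1) (pd1 Gh) y
            + vI ℓ X' (fun s => Q' s * (n' s).2) (pd2 Gh) y)
        = fun y => vI ℓ X' (fun s => Q' s * (n' s).1) (pd2 (pd1 Gh)) y
            + vI ℓ X' (fun s => Q' s * (n' s).2) (pd2 (pd2 Gh)) y := by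
      rw [pd2_add (vI_diff hX'c hc1 hg1_1) (vI_diff hX'c hc2 hg2_1),
        vI_pd2 hX'c hc1 hg1_1, vI_pd2 hX'c hc2 hg2_1]
    have hlapU1 : pd1 (pd1 (fun y => vI ℓ X' (fun s => Q' s * (n' s).1) (pd1 Gh) y
            + vI ℓ X' (fun s => Q' s * (n' s).2) (pd2 Gh) y))
        = fun y => vI ℓ X' (fun s => Q' s * (n' s).1) (pd1 (pd1 (pd1 Gh))) y
            + vI ℓ X' (fun s => Q' s * (n' s).2) (pd1 (pd1 (pd2 Gh))) y := by
      rw [hpdU1, pd1_add (vI_diff hX'c hc1 h11) (vI_diff hX'c hc2 h12),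
        vI_pd1 hX'c hc1 h11, vI_pd1 hX'c hc2 h12]
    have hlapU2 : pd2 (pd2 (fun y => vI ℓ X' (fun s => Q' s * (n' s).1) (pd1 Gh) y
            + vI ℓ X' (fun s => Q' s * (n' s).2) (pd2 Gh) y))
        = fun y => vI ℓ X' (fun s => Q' s * (n' s).1) (pd2 (pd2 (pd1 Gh))) y
            + vI ℓ X' (fun s => Q' s * (n' s).2) (pd2 (pd2 (pd2 Gh))) y := by
      rw [hpdU2, pd2_add (vI_diff hX'c hc1 h21) (vI_diff hX'c hc2 h22),
        vI_pd2 hX'c hc1 h21, vI_pd2 hX'c hc2 h22]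
    -- differentiated Green identity
    have hGreen' : (fun z => pd1 (pd1 Gh) z + pd2 (pd2 Gh) z - k ^ 2 * Gh z)
        = fun z => -δh z := funext fun z => hGreen z
    have hgreen_d : ∀ (v : ℝ × ℝ) (z : ℝ × ℝ),
        fderiv ℝ (pd1 (pd1 Gh)) z v + fderiv ℝ (pd2 (pd2 Gh)) z v
          - k ^ 2 * fderiv ℝ Gh z v = -(fderiv ℝ δh z v) := by
      intro v z
      have hd1 : DifferentiableAt ℝ (pd1 (pd1 Gh)) z := (h11.differentiable one_ne_zero) z
      have hd2 : DifferentiableAt ℝ (pd2 (pd2 Gh)) z := (h22.differentiable one_ne_zero) z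
      have hd3 : DifferentiableAt ℝ Gh z := (hGh.differentiable (by norm_num)) z
      have e := congrArg (fun f : ℝ × ℝ → ℝ => fderiv ℝ f z v) hGreen'
      rw [fderiv_fun_sub (f := fun z => pd1 (pd1 Gh) z + pd2 (pd2 Gh) z) (hd1.add hd2) (hd3.const_mul (k ^ 2)), fderiv_fun_add hd1 hd2,
        fderiv_const_mul hd3, fderiv_fun_neg] at e
      simpa using e
    -- symmetry of second derivatives
    have e2 : pd1 (pd2 Gh) = pd2 (pd1 Gh) := pd_comm Gh hGh2 (1, 0) (0, 1)
    have hcomm1 : pd1 (pd2 (pd2 Gh)) = pd2 (pd2 (pd1 Gh)) := by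
      have e1 : pd1 (pd2 (pd2 Gh)) = pd2 (pd1 (pd2 Gh)) := pd_comm (pd2 Gh) hg2_2 (1, 0) (0, 1)
      rw [e1, e2]
    have hcomm2 : pd2 (pd1 (pd1 Gh)) = pd1 (pd1 (pd2 Gh)) := by
      have e1 : pd2 (pd1 (pd1 Gh)) = pd1 (pd2 (pd1 Gh)) := (pd_comm (pd1 Gh) hg1_2 (1, 0) (0, 1)).symm
      rw [e1, e2.symm]
    have hkey1 : ∀ z, pd1 (pd1 (pd1 Gh)) z + pd2 (pd2 (pd1 Gh)) z - k ^ 2 * pd1 Gh z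
        = -(pd1 δh z) := by
      intro z
      rw [← hcomm1]
      exact hgreen_d (1, 0) z
    have hkey2 : ∀ z, pd1 (pd1 (pd2 Gh)) z + pd2 (pd2 (pd2 Gh)) z - k ^ 2 * pd2 Gh z
        = -(pd2 δh z) := by
      intro z
      rw [← hcomm2]
      exact hgreen_d (0, 1) z
    -- the divergence term
    have hdiv : div2 (fun y => ∫ s in (0:ℝ)..ℓ, (Q s * δh (y - X s)) • n s) x
        = vI ℓ X' (fun s => Q' s * (n' s).1) (pd1 δh) x
          + vI ℓ X' (fun s => Q' s * (n' s).2) (pd2 δh) x := by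
      have hW1 : (fun y => (∫ s in (0:ℝ)..ℓ, (Q s * δh (y - X s)) • n s).1)
          = vI ℓ X' (fun s => Q' s * (n' s).1) δh := by
        funext y
        have hint : IntervalIntegrable (fun s => (Q' s * δh (y - X' s)) • n' s) volume 0 ℓ :=
          ((hQ'c.mul (hδ.continuous.comp (continuous_const.sub hX'c))).smul hn'c).intervalIntegrable _ _
        have hcongr : (∫ s in (0:ℝ)..ℓ, (Q s * δh (y - X s)) • n s)
            = ∫ s in (0:ℝ)..ℓ, (Q' s * δh (y - X' s)) • n' s := by
          symm
          apply intervalIntegral.integral_congr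
          intro s hs
          rw [hIcc] at hs
          beta_reduce
          rw [hQ' s hs, hX' s hs, hn' s hs]
        rw [hcongr,
          show (∫ s in (0:ℝ)..ℓ, (Q' s * δh (y - X' s)) • n' s).1
            = ∫ s in (0:ℝ)..ℓ, ((Q' s * δh (y - X' s)) • n' s).1 from
          (ContinuousLinearMap.intervalIntegral_comp_comm (ContinuousLinearMap.fst ℝ ℝ ℝ) hint).symm]
        simp only [vI]
        apply intervalIntegral.integral_congr
        intro s _
        simp only [Prod.smul_fst, smul_eq_mul]
        ring
      have hW2 : (fun y => (∫ s in (0:ℝ)..ℓ, (Q s * δh (y - X s)) • n s).2)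
          = vI ℓ X' (fun s => Q' s * (n' s).2) δh := by
        funext y
        have hint : IntervalIntegrable (fun s => (Q' s * δh (y - X' s)) • n' s) volume 0 ℓ :=
          ((hQ'c.mul (hδ.continuous.comp (continuous_const.sub hX'c))).smul hn'c).intervalIntegrable _ _
        have hcongr : (∫ s in (0:ℝ)..ℓ, (Q s * δh (y - X s)) • n s)
            = ∫ s in (0:ℝ)..ℓ, (Q' s * δh (y - X' s)) • n' s := by
          symm
          apply intervalIntegral.integral_congr
          intro s hs
          rw [hIcc] at hs
          beta_reduce
          rw [hQ' s hs, hX' s hs, hn' s hs]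
        rw [hcongr,
          show (∫ s in (0:ℝ)..ℓ, (Q' s * δh (y - X' s)) • n' s).2
            = ∫ s in (0:ℝ)..ℓ, ((Q' s * δh (y - X' s)) • n' s).2 from
          (ContinuousLinearMap.intervalIntegral_comp_comm (ContinuousLinearMap.snd ℝ ℝ ℝ) hint).symm]
        simp only [vI]
        apply intervalIntegral.integral_congr
        intro s _
        simp only [Prod.smul_snd, smul_eq_mul]
        ring
      simp only [div2]
      rw [hW1, hW2]
      show pd1 (vI ℓ X' (fun s => Q' s * (n' s).1) δh) x
          + pd2 (vI ℓ X' (fun s => Q' s * (n' s).2) δh) x = _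
      rw [vI_pd1 hX'c hc1 hδ, vI_pd2 hX'c hc2 hδ]
    rw [hdiv]
    simp only [lap2]
    rw [hlapU1, hlapU2]
    have L1 := vI_linear (ℓ := ℓ) (c := fun s => Q' s * (n' s).1) hX'c hc1 k
      (C1 h11) (C2 h21) hg1_2.continuous (C1 hδ) hkey1 x
    have L2 := vI_linear (ℓ := ℓ) (c := fun s => Q' s * (n' s).2) hX'c hc2 k
      (C1 h12) (C2 h22) hg2_2.continuous (C2 hδ) hkey2 x
    simp only []
    linarith [L1, L2]
end
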